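/- Suppose ⪯ is a partial quasi-order on a set 𝒮, 𝒮₀,…,𝒮ₙ ⊆ 𝒮 are defined by 𝒮ᵢ = {F(S) : S ∈ 𝒮ᵢ₋₁, F ∈ ℱᵢ, Hᵢ(F(S)) ≤ 0}, and T₀,…,Tₙ are defined by T₀ being a dominating subset of 𝒮₀ and Tᵢ a dominating subset of {F(S) : S ∈ Tᵢ₋₁, F ∈ ℱᵢ, Hᵢ(F(S)) ≤ 0}. Assume (C.1) for all S, S', if S ⪯ S' then F(S) ⪯ F(S') for all F ∈ ℱᵢ, and (C.2) for all S, S', if S ⪯ S' and Hᵢ(S) ≤ 0 then Hᵢ(S') ≤ 0. Then for every i and every S* ∈ 𝒮ᵢ there exists S ∈ Tᵢ with S* ⪯ S. -/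

import Mathlib

/-!
Induction on the phase. If every state of `𝒮 (i-1)` is dominated by one of `T (i-1)`, then
monotonicity of the transitions (C.1) carries the domination through one transition, and upward
closure of feasibility (C.2) keeps the dominating successor feasible; pruning to `T i` loses
nothing because `T i` dominates the feasible successors of `T (i-1)`, and domination is transitive.
-/

namespace DominancePruning

variable {α : Type*} (r : α → α → Prop)

def Dominated (A B : Set α) : Prop := ∀ a ∈ A, ∃ b ∈ B, r a b

def feasibleSuccessors (F : Set (α → α)) (p : α → Prop) (A : Set α) : Set α :=
  {y | ∃ s ∈ A, ∃ f ∈ F, f s = y ∧ p y}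

variable {r}

theorem Dominated.trans (htrans : ∀ x y z, r x y → r y z → r x z) {A B C : Set α}
    (hAB : Dominated r A B) (hBC : Dominated r B C) : Dominated r A C := by
  intro a ha
  obtain ⟨b, hb, hab⟩ := hAB a ha
  obtain ⟨c, hc, hbc⟩ := hBC b hb
  exact ⟨c, hc, htrans a b c hab hbc⟩

theorem Dominated.feasibleSuccessors {F : Set (α → α)} {p : α → Prop}
    (hmono : ∀ f ∈ F, ∀ s s', r s s' → r (f s) (f s'))
    (hup : ∀ s s', r s s' → p s → p s') {A B : Set α} (hAB : Dominated r A B) :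
    Dominated r (feasibleSuccessors F p A) (feasibleSuccessors F p B) := by
  rintro _ ⟨a, ha, f, hf, rfl, hfa⟩
  obtain ⟨b, hb, hab⟩ := hAB a ha
  have hfab : r (f a) (f b) := hmono f hf a b hab
  exact ⟨f b, ⟨b, hb, f, hf, rfl, hup _ _ hfab hfa⟩, hfab⟩

end DominancePruning

open DominancePruning in
theorem stmt_3_general {α : Type*} (r : α → α → Prop)
    (htrans : ∀ x y z, r x y → r y z → r x z)
    (n : ℕ) (F : ℕ → Set (α → α)) (H : ℕ → α → ℝ)
    (𝒮 : ℕ → Set α) (T : ℕ → Set α)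
    (h𝒮 : ∀ i, 1 ≤ i → i ≤ n →
      𝒮 i = {y | ∃ s ∈ 𝒮 (i - 1), ∃ f ∈ F i, f s = y ∧ H i y ≤ 0})
    (hT0dom : ∀ s ∈ 𝒮 0, ∃ t ∈ T 0, r s t)
    (hTdom : ∀ i, 1 ≤ i → i ≤ n →
      ∀ y ∈ {y | ∃ s ∈ T (i - 1), ∃ f ∈ F i, f s = y ∧ H i y ≤ 0},
        ∃ t ∈ T i, r y t)
    (C1 : ∀ i, 1 ≤ i → i ≤ n → ∀ f ∈ F i, ∀ s s', r s s' → r (f s) (f s'))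
    (C2 : ∀ i, 1 ≤ i → i ≤ n → ∀ s s', r s s' → H i s ≤ 0 → H i s' ≤ 0) :
    ∀ i ≤ n, ∀ sstar ∈ 𝒮 i, ∃ s ∈ T i, r sstar s := by
  intro i
  induction i with
  | zero => exact fun _ => hT0dom
  | succ k ih =>
    intro hk
    have hk1 : 1 ≤ k + 1 := Nat.le_add_left 1 k
    have hstep : Dominated r (feasibleSuccessors (F (k + 1)) (H (k + 1) · ≤ 0) (𝒮 k))
        (feasibleSuccessors (F (k + 1)) (H (k + 1) · ≤ 0) (T k)) :=
      Dominated.feasibleSuccessors (C1 _ hk1 hk) (C2 _ hk1 hk) (ih (Nat.le_of_succ_le hk))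
    rw [h𝒮 _ hk1 hk]
    exact hstep.trans htrans (hTdom _ hk1 hk)

/-- Proposition 1: correctness of pruning by dominance in dynamic programming.
Under conditions C.1 and C.2, every state of the full DP state space `𝒮 i`
is dominated by some state of the pruned set `T i`. -/
theorem stmt_3 {α : Type*} (r : α → α → Prop)
    (hrefl : ∀ x, r x x) (htrans : ∀ x y z, r x y → r y z → r x z)
    (n : ℕ) (F : ℕ → Set (α → α)) (H : ℕ → α → ℝ)
    (𝒮 : ℕ → Set α) (T : ℕ → Set α)
    (h𝒮 : ∀ i, 1 ≤ i → i ≤ n →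
      𝒮 i = {y | ∃ s ∈ 𝒮 (i - 1), ∃ f ∈ F i, f s = y ∧ H i y ≤ 0})
    (hT0sub : T 0 ⊆ 𝒮 0)
    (hT0dom : ∀ s ∈ 𝒮 0, ∃ t ∈ T 0, r s t)
    (hTsub : ∀ i, 1 ≤ i → i ≤ n →
      T i ⊆ {y | ∃ s ∈ T (i - 1), ∃ f ∈ F i, f s = y ∧ H i y ≤ 0})
    (hTdom : ∀ i, 1 ≤ i → i ≤ n →
      ∀ y ∈ {y | ∃ s ∈ T (i - 1), ∃ f ∈ F i, f s = y ∧ H i y ≤ 0},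
        ∃ t ∈ T i, r y t)
    (C1 : ∀ i, 1 ≤ i → i ≤ n → ∀ f ∈ F i, ∀ s s', r s s' → r (f s) (f s'))
    (C2 : ∀ i, 1 ≤ i → i ≤ n → ∀ s s', r s s' → H i s ≤ 0 → H i s' ≤ 0) :
    ∀ i ≤ n, ∀ sstar ∈ 𝒮 i, ∃ s ∈ T i, r sstar s :=
  stmt_3_general r htrans n F H 𝒮 T h𝒮 hT0dom hTdom C1 C2
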